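/- The pruned landmark labeling index is an exact distance oracle: for every pair of vertices s and t, Query(s, t, L'_n) = d_G(s, t). -/

import Mathlib

open SimpleGraph

/-- The 2-hop query value computed from a label assignment `L`:
the minimum of `d₁ + d₂` over common label vertices, `∞` if none. -/
noncomputable def Query {V : Type*} (L : V → Set (V × ℕ∞)) (s t : V) : ℕ∞ :=
  sInf {x : ℕ∞ | ∃ w d₁ d₂, (w, d₁) ∈ L s ∧ (w, d₂) ∈ L t ∧ x = d₁ + d₂}

/- The naive landmark labels `L_k`. -/
open Classical in
noncomputable def naiveL {V : Type*} (G : SimpleGraph V) (ord : ℕ → V) :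
    ℕ → V → Set (V × ℕ∞)
  | 0 => fun _ => ∅
  | (k + 1) => fun u =>
      if G.edist (ord (k + 1)) u < ⊤ then
        naiveL G ord k u ∪ {(ord (k + 1), G.edist (ord (k + 1)) u)}
      else naiveL G ord k u

/- The pruned landmark labels `L'_k`. -/
open Classical in
noncomputable def prunedL {V : Type*} (G : SimpleGraph V) (ord : ℕ → V) :
    ℕ → V → Set (V × ℕ∞)
  | 0 => fun _ => ∅
  | (k + 1) => fun u =>
      if G.edist (ord (k + 1)) u < ⊤ ∧
          G.edist (ord (k + 1)) u < Query (prunedL G ord k) (ord (k + 1)) u then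
        prunedL G ord k u ∪ {(ord (k + 1), G.edist (ord (k + 1)) u)}
      else prunedL G ord k u

/-- `P_G(s,t)`: the set of vertices on shortest paths between `s` and `t`. -/
def PG {V : Type*} (G : SimpleGraph V) (s t : V) : Set V :=
  {w | G.edist s w + G.edist w t = G.edist s t}
-- attainment helper
lemma sInf_le_attain {S : Set ℕ∞} {c : ℕ∞} (h : sInf S ≤ c) (hc : c < ⊤) :
    ∃ x ∈ S, x ≤ c := by
  by_contra hcon
  push_neg at hcon
  have : c + 1 ≤ sInf S := le_sInf fun x hx => Order.add_one_le_of_lt (hcon x hx)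
  have h2 := this.trans h
  have hlt : c < c + 1 := (ENat.lt_add_one_iff hc.ne).2 le_rfl
  exact absurd h2 (not_le.2 hlt)

-- invariant
lemma mem_prunedL_spec {V : Type*} (G : SimpleGraph V) (ord : ℕ → V) :
    ∀ k u w d, (w, d) ∈ prunedL G ord k u →
      (∃ j, 1 ≤ j ∧ j ≤ k ∧ ord j = w) ∧ d = G.edist w u := by
  intro k
  induction k with
  | zero => intro u w d h; simp [prunedL] at h
  | succ k ih =>
    intro u w d h
    simp only [prunedL] at h
    split_ifs at h with hc
    · rcases h with h | h
      · obtain ⟨⟨j, h1, h2, h3⟩, h4⟩ := ih u w d h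
        exact ⟨⟨j, h1, h2.trans (Nat.le_succ k), h3⟩, h4⟩
      · simp at h
        exact ⟨⟨k+1, Nat.succ_le_succ (Nat.zero_le k), le_rfl, h.1.symm⟩, by rw [h.2, h.1]⟩
    · obtain ⟨⟨j, h1, h2, h3⟩, h4⟩ := ih u w d h
      exact ⟨⟨j, h1, h2.trans (Nat.le_succ k), h3⟩, h4⟩

lemma prunedL_mono {V : Type*} (G : SimpleGraph V) (ord : ℕ → V) {k m : ℕ}
    (h : k ≤ m) (u : V) : prunedL G ord k u ⊆ prunedL G ord m u := by
  induction m with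
  | zero => simp_all
  | succ m ih =>
    rcases Nat.lt_succ_iff_lt_or_eq.1 (Nat.lt_succ_of_le h) with h' | rfl
    · refine (ih (Nat.lt_succ_iff.1 h')).trans ?_
      intro x hx
      simp only [prunedL]
      split_ifs with hc
      · exact Or.inl hx
      · exact hx
    · exact subset_rfl

lemma query_ge {V : Type*} (G : SimpleGraph V) (ord : ℕ → V) (k : ℕ) (s t : V) :
    G.edist s t ≤ Query (prunedL G ord k) s t := by
  refine le_sInf fun x hx => ?_
  obtain ⟨w, d₁, d₂, h1, h2, rfl⟩ := hx
  have e1 := (mem_prunedL_spec G ord k s w d₁ h1).2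
  have e2 := (mem_prunedL_spec G ord k t w d₂ h2).2
  rw [e1, e2, G.edist_comm (u := w) (v := s)]
  exact G.edist_triangle

lemma PG_comm {V : Type*} (G : SimpleGraph V) (s t : V) : PG G s t = PG G t s := by
  ext w
  simp only [PG, Set.mem_setOf_eq]
  rw [G.edist_comm (u := s) (v := w), G.edist_comm (u := w) (v := t), G.edist_comm (u := s) (v := t), add_comm]

lemma key_mem {V : Type*} (G : SimpleGraph V) (ord : ℕ → V) (s t : V) (k : ℕ)
    (hm : ord (k+1) ∈ PG G s t) (hfin : G.edist s t < ⊤)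
    (hmin : ∀ j, 1 ≤ j → j < k + 1 → ord j ∉ PG G s t) :
    (ord (k+1), G.edist (ord (k+1)) s) ∈ prunedL G ord (k+1) s := by
  set i := k + 1
  have hfin1 : G.edist (ord i) s < ⊤ := by
    have := hm
    simp only [PG, Set.mem_setOf_eq] at this
    rw [G.edist_comm]
    have : G.edist s (ord i) ≤ G.edist s t := by
      rw [← this]; exact le_add_right le_rfl
    exact this.trans_lt hfin
  have hq : G.edist (ord i) s < Query (prunedL G ord k) (ord i) s := by
    by_contra hle
    push_neg at hle
    obtain ⟨x, hx, hxle⟩ := sInf_le_attain hle hfin1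
    obtain ⟨w, d₁, d₂, h1, h2, rfl⟩ := hx
    obtain ⟨⟨j, hj1, hj2, rfl⟩, e1⟩ := mem_prunedL_spec G ord k (ord i) w d₁ h1
    have e2 := (mem_prunedL_spec G ord k s (ord j) d₂ h2).2
    rw [e1, e2] at hxle
    -- ord j ∈ PG G s t
    have hPGi : G.edist s (ord i) + G.edist (ord i) t = G.edist s t := hm
    have hwj : G.edist s (ord j) + G.edist (ord j) (ord i) ≤ G.edist s (ord i) := by
      rw [G.edist_comm (u := s) (v := ord j), G.edist_comm (u := s) (v := ord i), add_comm]
      exact hxle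
    have : G.edist s (ord j) + G.edist (ord j) t ≤ G.edist s t := by
      calc G.edist s (ord j) + G.edist (ord j) t
          ≤ G.edist s (ord j) + (G.edist (ord j) (ord i) + G.edist (ord i) t) :=
            add_le_add le_rfl G.edist_triangle
        _ = (G.edist s (ord j) + G.edist (ord j) (ord i)) + G.edist (ord i) t := by ring
        _ ≤ G.edist s (ord i) + G.edist (ord i) t := add_le_add hwj le_rfl
        _ = G.edist s t := hPGi
    have hjPG : ord j ∈ PG G s t := le_antisymm this G.edist_triangle
    exact hmin j hj1 (Nat.lt_succ_of_le hj2) hjPG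
  have hcond : G.edist (ord (k+1)) s < ⊤ ∧
      G.edist (ord (k+1)) s < Query (prunedL G ord k) (ord (k+1)) s := ⟨hfin1, hq⟩
  simp only [i, prunedL]
  rw [if_pos hcond]
  exact Set.mem_union_right _ rfl


/-- The pruned landmark labeling index is an exact distance oracle:
`Query(s, t, L'_n) = d_G(s, t)` for every pair of vertices `s, t`. -/
theorem query_prunedL_eq_edist {V : Type*} [Fintype V] (G : SimpleGraph V)
    (n : ℕ) (ord : ℕ → V)
    (hinj : ∀ i ∈ Finset.Icc 1 n, ∀ j ∈ Finset.Icc 1 n, ord i = ord j → i = j)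
    (hsurj : ∀ u : V, ∃ i ∈ Finset.Icc 1 n, ord i = u)
    (s t : V) :
    Query (prunedL G ord n) s t = G.edist s t := by
  by_cases hfin : G.edist s t < ⊤
  · obtain ⟨i0, hi0, hi0e⟩ := hsurj s
    rw [Finset.mem_Icc] at hi0
    have hsPG : s ∈ PG G s t := by
      simp [PG, G.edist_self]
    set S : Set ℕ := {j | 1 ≤ j ∧ j ≤ n ∧ ord j ∈ PG G s t} with hSdef
    have hS : S.Nonempty := by
      refine ⟨i0, ?_⟩
      simp only [hSdef, Set.mem_setOf_eq]
      refine ⟨hi0.1, hi0.2, ?_⟩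
      rw [hi0e]; exact hsPG
    have hiS : sInf S ∈ S := Nat.sInf_mem hS
    obtain ⟨h1i, h2i, h3i⟩ := hiS
    have hmin : ∀ j, 1 ≤ j → j < sInf S → ord j ∉ PG G s t := by
      intro j hj1 hj2 hPG
      have hjS : j ∈ S := by
        simp only [hSdef, Set.mem_setOf_eq]
        exact ⟨hj1, le_trans (Nat.le_of_lt hj2) h2i, hPG⟩
      exact absurd (Nat.sInf_le hjS) (not_le.2 hj2)
    obtain ⟨k, hk⟩ : ∃ k, sInf S = k + 1 := ⟨sInf S - 1, (Nat.succ_pred_eq_of_pos h1i).symm⟩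
    have hmem_s : (ord (k+1), G.edist (ord (k+1)) s) ∈ prunedL G ord (k+1) s :=
      key_mem G ord s t k (hk ▸ h3i) hfin (hk ▸ hmin)
    have hfin' : G.edist t s < ⊤ := by rwa [G.edist_comm (u := t) (v := s)]
    have hmem_t : (ord (k+1), G.edist (ord (k+1)) t) ∈ prunedL G ord (k+1) t := by
      refine key_mem G ord t s k ?_ hfin' ?_
      · rw [← PG_comm]; exact hk ▸ h3i
      · intro j a b; rw [← PG_comm]; exact hmin j a (by omega)
    refine le_antisymm ?_ (query_ge G ord n s t)
    have hle : k + 1 ≤ n := hk ▸ h2i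
    have hq : Query (prunedL G ord n) s t ≤
        G.edist (ord (k+1)) s + G.edist (ord (k+1)) t :=
      sInf_le ⟨ord (k+1), _, _, prunedL_mono G ord hle s hmem_s,
        prunedL_mono G ord hle t hmem_t, rfl⟩
    refine hq.trans ?_
    rw [G.edist_comm (u := ord (k+1)) (v := s)]
    exact le_of_eq (hk ▸ h3i)
  · have htop : G.edist s t = ⊤ := by
      simpa using hfin
    refine le_antisymm ?_ (query_ge G ord n s t)
    rw [htop]; exact le_top
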